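/- If x = ∑_{n=1}^∞ (−1)^n ε_n/(d_1⋯d_n) and φ̂^k(x) = ∑_{j=1}^∞ (−1)^j ε_{k+j}/(d_{k+1}⋯d_{k+j}) denotes the k-fold shift, then φ̂^k(x) = (−1)^k d_1⋯d_k · x + (−1)^{k+1} d_1⋯d_k · ∑_{i=1}^k (−1)^i ε_i/(d_1⋯d_i). -/

import Mathlib

open Finset

/-- Product d_1 d_2 ... d_n. -/
noncomputable def P (d : ℕ → ℕ) (n : ℕ) : ℝ := ∏ i ∈ Finset.Icc 1 n, (d i : ℝ)

/-- The alternating Cantor series sum ∑_{n≥1} (-1)^n ε_n/(d_1...d_n). -/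
noncomputable def negaSum (d ε : ℕ → ℕ) : ℝ :=
  ∑' n : ℕ, (-1 : ℝ) ^ (n + 1) * (ε (n + 1) : ℝ) / P d (n + 1)

/-- a₀ = ∑_{n≥1} (-1)^{n+1}/(d_1...d_n). -/
noncomputable def a0 (d : ℕ → ℕ) : ℝ := ∑' n : ℕ, (-1 : ℝ) ^ n / P d (n + 1)

/-- k-fold shift of the representation: ∑_{j≥1} (-1)^j ε_{k+j}/(d_{k+1}...d_{k+j}). -/
noncomputable def shift (d ε : ℕ → ℕ) (k : ℕ) : ℝ :=
  ∑' j : ℕ, (-1 : ℝ) ^ (j + 1) * (ε (k + j + 1) : ℝ) / ∏ i ∈ Finset.Icc (k + 1) (k + j + 1), (d i : ℝ)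

/-- Partial sum g_k = ∑_{i=1}^k (-1)^i ε_i/(d_1...d_i). -/
noncomputable def g (d ε : ℕ → ℕ) (k : ℕ) : ℝ :=
  ∑ i ∈ Finset.Icc 1 k, (-1 : ℝ) ^ i * (ε i : ℝ) / P d i

/-! With `a n = (-1)^(n+1) ε_(n+1) / (d_1 ⋯ d_(n+1))`, so that `x = ∑ a n`, the shifted series is
term by term `(-1)^k d_1 ⋯ d_k` times the tail `∑_{n ≥ k} a n = x - g_k`. The only analytic
input is summability, which follows from `|a n| ≤ 1 / (d_1 ⋯ d_n) ≤ 2^(-n)`. -/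

noncomputable def negaTerm (d ε : ℕ → ℕ) (n : ℕ) : ℝ :=
  (-1 : ℝ) ^ (n + 1) * (ε (n + 1) : ℝ) / P d (n + 1)

lemma negaSum_eq_tsum_negaTerm (d ε : ℕ → ℕ) : negaSum d ε = ∑' n, negaTerm d ε n := rfl

lemma P_succ (d : ℕ → ℕ) (n : ℕ) : P d (n + 1) = P d n * d (n + 1) :=
  prod_Icc_succ_top (Nat.le_add_left 1 n) _

lemma P_mul_prod_Icc (d : ℕ → ℕ) {k n : ℕ} (hkn : k ≤ n) :
    P d k * ∏ i ∈ Icc (k + 1) n, (d i : ℝ) = P d n := by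
  have hIcc (m : ℕ) : Icc 1 m = Ioc 0 m := Icc_add_one_left_eq_Ioc 0 m
  rw [P, P, hIcc, hIcc, Icc_add_one_left_eq_Ioc]
  exact prod_Ioc_consecutive _ (Nat.zero_le k) hkn

lemma P_pos {d : ℕ → ℕ} (hd : ∀ n, 1 ≤ n → 0 < d n) (n : ℕ) : 0 < P d n :=
  prod_pos fun i hi => Nat.cast_pos.mpr (hd i (mem_Icc.mp hi).1)

lemma two_pow_le_P {d : ℕ → ℕ} (hd : ∀ n, 1 ≤ n → 2 ≤ d n) (n : ℕ) : (2 : ℝ) ^ n ≤ P d n := by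
  induction n with
  | zero => simp [P]
  | succ m ih =>
    rw [P_succ, pow_succ]
    have hm : (2 : ℝ) ≤ d (m + 1) := by exact_mod_cast hd (m + 1) (Nat.le_add_left 1 m)
    exact mul_le_mul ih hm zero_le_two ((pow_pos two_pos m).le.trans ih)

lemma abs_negaTerm_le_inv_P {d ε : ℕ → ℕ} {n : ℕ} (hd : 0 < d (n + 1))
    (hε : ε (n + 1) ≤ d (n + 1)) (hP : 0 < P d n) : |negaTerm d ε n| ≤ (P d n)⁻¹ := by
  have hd' : (0 : ℝ) < d (n + 1) := Nat.cast_pos.mpr hd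
  calc |negaTerm d ε n| = ε (n + 1) / P d (n + 1) := by
        simp [negaTerm, abs_div, P_succ, abs_of_pos (mul_pos hP hd')]
    _ ≤ d (n + 1) / P d (n + 1) := by rw [P_succ]; gcongr
    _ = (P d n)⁻¹ := by rw [P_succ, div_mul_cancel_right₀ hd'.ne']

lemma summable_negaTerm {d ε : ℕ → ℕ} (hd : ∀ n, 1 ≤ n → 2 ≤ d n)
    (hε : ∀ n, 1 ≤ n → ε n ≤ d n - 1) : Summable (negaTerm d ε) := by
  have hP : ∀ n, 0 < P d n := P_pos fun n hn => two_pos.trans_le (hd n hn)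
  refine .of_norm_bounded (summable_geometric_of_lt_one (by norm_num) (by norm_num : (2⁻¹ : ℝ) < 1))
    fun n => ?_
  have hn : 1 ≤ n + 1 := Nat.le_add_left 1 n
  calc ‖negaTerm d ε n‖ ≤ (P d n)⁻¹ :=
        abs_negaTerm_le_inv_P (two_pos.trans_le (hd _ hn)) ((hε _ hn).trans (Nat.sub_le _ _)) (hP n)
    _ ≤ ((2 : ℝ) ^ n)⁻¹ := inv_anti₀ (by positivity) (two_pow_le_P hd n)
    _ = (2⁻¹ : ℝ) ^ n := (inv_pow _ _).symm

lemma g_eq_sum_range_negaTerm (d ε : ℕ → ℕ) (k : ℕ) :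
    g d ε k = ∑ i ∈ range k, negaTerm d ε i := by
  rw [g, ← Ico_add_one_right_eq_Icc, sum_Ico_eq_sum_range]
  exact sum_congr rfl fun i _ => by rw [negaTerm, add_comm 1 i]

lemma shift_eq_mul_tsum_negaTerm {d : ℕ → ℕ} (ε : ℕ → ℕ) {k : ℕ} (hPk : P d k ≠ 0) :
    shift d ε k = (-1 : ℝ) ^ k * P d k * ∑' j, negaTerm d ε (j + k) := by
  rw [shift, ← tsum_mul_left]
  refine tsum_congr fun j => ?_
  have hsign : (-1 : ℝ) ^ (j + k + 1) = (-1) ^ k * (-1) ^ (j + 1) := by ring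
  have hsq : ((-1 : ℝ) ^ k) ^ 2 = 1 := by rw [← pow_mul, Even.neg_one_pow ⟨k, by ring⟩]
  rw [negaTerm, hsign, show j + k + 1 = k + j + 1 by ring,
    ← P_mul_prod_Icc d (by omega : k ≤ k + j + 1)]
  field_simp
  rw [hsq, mul_one]

theorem shift_eq_affine (d ε : ℕ → ℕ) (k : ℕ)
    (hd : ∀ n, 1 ≤ n → 2 ≤ d n) (hε : ∀ n, 1 ≤ n → ε n ≤ d n - 1) :
    shift d ε k = (-1 : ℝ) ^ k * P d k * negaSum d ε +
      (-1 : ℝ) ^ (k + 1) * P d k * g d ε k := by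
  have hPk : P d k ≠ 0 := (P_pos (fun n hn => two_pos.trans_le (hd n hn)) k).ne'
  have htail : ∑' j, negaTerm d ε (j + k) = negaSum d ε - g d ε k := by
    rw [g_eq_sum_range_negaTerm, negaSum_eq_tsum_negaTerm,
      ← (summable_negaTerm hd hε).sum_add_tsum_nat_add k, add_sub_cancel_left]
  rw [shift_eq_mul_tsum_negaTerm ε hPk, htail]
  ring
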